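/- arXiv:1612.06835 — 3 statements merged into one kernel-verified Lean document; each statement's English description precedes it below -/
import Mathlib

section
/- For every real y > 0, the complementary error function satisfies the two-sided bound (2/√π)·e^{−y²}/(y + √(y²+2)) < erfc(y) ≤ (2/√π)·e^{−y²}/(y + √(y²+4/π)). -/
/-!
With `s = √(y² + c)`, the function `erfcBound c y = (2/√π) e^{-y²} / (y + s)` tends to `0` at
infinity like `erfc`, and since `(y + s)² - 2y(y + s) = c`, the derivative of
`erfcBound c - erfc` has the sign of `(c - 1) s - y`. For `c ≥ 2` this is positive everywhere, so
`erfcBound c - erfc` increases strictly to `0` and is negative. For `1 ≤ c < 2` the difference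
increases on `[0, √((c - 1)² / (2 - c))]` and then decreases to `0`, so it is nonnegative on
`[0, ∞)` as soon as it is at `0`, that is, as soon as `1 / √c ≥ √π / 2`, i.e. `c ≤ 4 / π`.
-/

open Real MeasureTheory

/-- erfc(x) = (2/√π)·∫_x^∞ e^{−t²} dt -/
noncomputable def erfc (x : ℝ) : ℝ := (2 / Real.sqrt Real.pi) * ∫ t in Set.Ioi x, Real.exp (-t ^ 2)

open Set Filter Topology

lemma integrable_exp_neg_sq : Integrable fun t : ℝ => exp (-t ^ 2) := by
  simpa using integrable_exp_neg_mul_sq one_pos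

lemma erfc_zero : erfc 0 = 1 := by
  have hπ : √π ≠ 0 := (sqrt_pos.mpr pi_pos).ne'
  have h := integral_gaussian_Ioi 1
  simp only [neg_mul, one_mul, div_one] at h
  rw [erfc, h]
  field_simp

lemma erfc_eq_one_sub_integral (x : ℝ) :
    erfc x = 1 - 2 / √π * ∫ t in (0 : ℝ)..x, exp (-t ^ 2) := by
  rw [← intervalIntegral.integral_Ioi_sub_Ioi' integrable_exp_neg_sq.integrableOn
    integrable_exp_neg_sq.integrableOn, mul_sub, ← erfc, ← erfc, erfc_zero, sub_sub_cancel]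

lemma hasDerivAt_erfc (x : ℝ) : HasDerivAt erfc (-(2 / √π * exp (-x ^ 2))) x := by
  have h := ((continuous_exp.comp (continuous_pow 2).neg).integral_hasStrictDerivAt 0
    x).hasDerivAt.const_mul (2 / √π) |>.const_sub 1
  simp only [Function.comp] at h
  exact h.congr_of_eventuallyEq (Eventually.of_forall erfc_eq_one_sub_integral)

lemma tendsto_erfc_atTop : Tendsto erfc atTop (𝓝 0) := by
  have h := (intervalIntegral_tendsto_integral_Ioi 0 integrable_exp_neg_sq.integrableOn
    tendsto_id).const_mul (2 / √π) |>.const_sub 1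
  rw [← erfc, erfc_zero, sub_self] at h
  exact h.congr fun x => (erfc_eq_one_sub_integral x).symm

noncomputable def erfcBound (c y : ℝ) : ℝ := 2 / √π * exp (-y ^ 2) / (y + √(y ^ 2 + c))

lemma abs_lt_sqrt_sq_add {c : ℝ} (hc : 0 < c) (y : ℝ) : |y| < √(y ^ 2 + c) := by
  rw [← sqrt_sq_eq_abs]
  exact sqrt_lt_sqrt (sq_nonneg y) (lt_add_of_pos_right _ hc)

lemma add_sqrt_sq_add_pos {c : ℝ} (hc : 0 < c) (y : ℝ) : 0 < y + √(y ^ 2 + c) := by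
  linarith [neg_abs_le y, abs_lt_sqrt_sq_add hc y]

lemma hasDerivAt_erfcBound_sub_erfc {c : ℝ} (hc : 0 < c) (y : ℝ) :
    HasDerivAt (fun x => erfcBound c x - erfc x)
      (2 / √π * exp (-y ^ 2) * ((c - 1) * √(y ^ 2 + c) - y) /
        (√(y ^ 2 + c) * (y + √(y ^ 2 + c)) ^ 2)) y := by
  have hq : 0 < y ^ 2 + c := by positivity
  have hs2 : √(y ^ 2 + c) ^ 2 = y ^ 2 + c := sq_sqrt hq.le
  have hden := add_sqrt_sq_add_pos hc y
  have hexp : HasDerivAt (fun x => exp (-x ^ 2)) (exp (-y ^ 2) * -(2 * y)) y := by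
    simpa using ((hasDerivAt_pow 2 y).neg).exp
  have hsqrt : HasDerivAt (fun x => x + √(x ^ 2 + c)) (1 + 2 * y / (2 * √(y ^ 2 + c))) y := by
    simpa using (hasDerivAt_id y).fun_add (((hasDerivAt_pow 2 y).add_const c).sqrt hq.ne')
  refine (((hexp.const_mul (2 / √π)).div hsqrt hden.ne').sub (hasDerivAt_erfc y)).congr_deriv ?_
  field_simp
  linear_combination √(y ^ 2 + c) * hs2

lemma tendsto_erfcBound_atTop (c : ℝ) : Tendsto (erfcBound c) atTop (𝓝 0) := by
  have hexp : Tendsto (fun x : ℝ => exp (-x ^ 2)) atTop (𝓝 0) :=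
    tendsto_exp_neg_atTop_nhds_zero.comp (tendsto_pow_atTop two_ne_zero)
  have hden : Tendsto (fun x : ℝ => x + √(x ^ 2 + c)) atTop atTop :=
    tendsto_atTop_mono (fun _ => le_add_of_nonneg_right (sqrt_nonneg _)) tendsto_id
  unfold erfcBound
  simpa only [mul_zero, Function.comp_def, ← div_eq_mul_inv] using
    (hexp.const_mul (2 / √π)).mul (tendsto_inv_atTop_zero.comp hden)

lemma tendsto_erfcBound_sub_erfc_atTop (c : ℝ) :
    Tendsto (fun x => erfcBound c x - erfc x) atTop (𝓝 0) := by
  simpa using (tendsto_erfcBound_atTop c).sub tendsto_erfc_atTop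

lemma erfcBound_sub_erfc_strictMono {c : ℝ} (hc : 2 ≤ c) :
    StrictMono fun x => erfcBound c x - erfc x := by
  refine strictMono_of_hasDerivAt_pos (hasDerivAt_erfcBound_sub_erfc (by linarith)) fun y => ?_
  have hs := abs_lt_sqrt_sq_add (c := c) (by linarith) y
  have hy : y < (c - 1) * √(y ^ 2 + c) := by
    nlinarith [le_abs_self y, abs_nonneg y]
  have hden := add_sqrt_sq_add_pos (c := c) (by linarith) y
  have hs₀ : 0 < √(y ^ 2 + c) := (abs_nonneg y).trans_lt hs
  have hnum : 0 < (c - 1) * √(y ^ 2 + c) - y := sub_pos.mpr hy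
  positivity

theorem erfcBound_lt_erfc {c : ℝ} (hc : 2 ≤ c) (y : ℝ) : erfcBound c y < erfc y := by
  have hmono := erfcBound_sub_erfc_strictMono hc
  have := (hmono (lt_add_one y)).trans_le
    (hmono.monotone.ge_of_tendsto (tendsto_erfcBound_sub_erfc_atTop c) (y + 1))
  linarith

lemma le_sub_one_mul_sqrt_iff {c y : ℝ} (hc : 1 ≤ c) (hy : 0 ≤ y) :
    y ≤ (c - 1) * √(y ^ 2 + c) ↔ (2 - c) * y ^ 2 ≤ (c - 1) ^ 2 := by
  rw [← pow_le_pow_iff_left₀ hy (by positivity) two_ne_zero, mul_pow, sq_sqrt (by positivity)]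
  constructor <;> intro h <;> nlinarith

lemma sub_one_mul_sqrt_le_iff {c y : ℝ} (hc : 1 ≤ c) (hy : 0 ≤ y) :
    (c - 1) * √(y ^ 2 + c) ≤ y ↔ (c - 1) ^ 2 ≤ (2 - c) * y ^ 2 := by
  rw [← pow_le_pow_iff_left₀ (by positivity) hy two_ne_zero, mul_pow, sq_sqrt (by positivity)]
  constructor <;> intro h <;> nlinarith

lemma nonneg_of_monotoneOn_of_antitoneOn {f : ℝ → ℝ} {a b : ℝ} (hmono : MonotoneOn f (Icc a b))
    (hanti : AntitoneOn f (Ici b)) (ha : 0 ≤ f a) (hlim : Tendsto f atTop (𝓝 0)) {y : ℝ}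
    (hy : a ≤ y) : 0 ≤ f y := by
  rcases le_or_gt y b with hyb | hby
  · exact ha.trans (hmono ⟨le_rfl, hy.trans hyb⟩ ⟨hy, hyb⟩ hy)
  · refine le_of_tendsto hlim ?_
    filter_upwards [eventually_ge_atTop y] with z hz
    exact hanti (mem_Ici.mpr hby.le) (mem_Ici.mpr (hby.le.trans hz)) hz

lemma one_le_erfcBound_zero {c : ℝ} (hc : 0 < c) (hcπ : c ≤ 4 / π) : 1 ≤ erfcBound c 0 := by
  have hsc : √c ≤ 2 / √π := by
    calc √c ≤ √(4 / π) := sqrt_le_sqrt hcπ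
      _ = 2 / √π := by
        rw [sqrt_div' _ pi_pos.le, show (4 : ℝ) = 2 ^ 2 by norm_num, sqrt_sq two_pos.le]
  simpa [erfcBound, one_le_div (sqrt_pos.mpr hc)] using hsc

theorem erfc_le_erfcBound {c y : ℝ} (hc : 1 ≤ c) (hcπ : c ≤ 4 / π) (hy : 0 ≤ y) :
    erfc y ≤ erfcBound c y := by
  have hc0 : 0 < c := by linarith
  have hc2 : c < 2 := hcπ.trans_lt (by rw [div_lt_iff₀ pi_pos]; linarith [pi_gt_three])
  have hderiv := hasDerivAt_erfcBound_sub_erfc hc0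
  have hcont : Continuous fun x => erfcBound c x - erfc x :=
    continuous_iff_continuousAt.mpr fun x => (hderiv x).continuousAt
  set t₀ := √((c - 1) ^ 2 / (2 - c))
  have ht₀ : 0 ≤ t₀ := sqrt_nonneg _
  have hmono : MonotoneOn (fun x => erfcBound c x - erfc x) (Icc 0 t₀) := by
    refine monotoneOn_of_hasDerivWithinAt_nonneg (convex_Icc 0 t₀) hcont.continuousOn
      (fun x _ => (hderiv x).hasDerivWithinAt) fun x hx => ?_
    rw [interior_Icc] at hx
    have hx2 : x ^ 2 ≤ (c - 1) ^ 2 / (2 - c) := (le_sqrt hx.1.le (by positivity)).mp hx.2.le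
    rw [le_div_iff₀ (by linarith), mul_comm] at hx2
    have hnum := sub_nonneg.mpr ((le_sub_one_mul_sqrt_iff hc hx.1.le).mpr hx2)
    positivity
  have hanti : AntitoneOn (fun x => erfcBound c x - erfc x) (Ici t₀) := by
    refine antitoneOn_of_hasDerivWithinAt_nonpos (convex_Ici t₀) hcont.continuousOn
      (fun x _ => (hderiv x).hasDerivWithinAt) fun x hx => ?_
    rw [interior_Ici, mem_Ioi] at hx
    have hx0 : 0 < x := ht₀.trans_lt hx
    have hx2 : (c - 1) ^ 2 / (2 - c) < x ^ 2 := (sqrt_lt' hx0).mp hx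
    rw [div_lt_iff₀ (by linarith), mul_comm] at hx2
    have hneg := sub_nonpos.mpr ((sub_one_mul_sqrt_le_iff hc hx0.le).mpr hx2.le)
    exact div_nonpos_of_nonpos_of_nonneg (mul_nonpos_of_nonneg_of_nonpos (by positivity) hneg)
      (by positivity)
  have h₀ : 0 ≤ erfcBound c 0 - erfc 0 := by
    rw [erfc_zero, sub_nonneg]
    exact one_le_erfcBound_zero hc0 hcπ
  exact sub_nonneg.mp (nonneg_of_monotoneOn_of_antitoneOn hmono hanti h₀
    (tendsto_erfcBound_sub_erfc_atTop c) hy)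

theorem stmt1 (y : ℝ) (hy : 0 < y) :
    (2 / Real.sqrt Real.pi) * Real.exp (-y ^ 2) / (y + Real.sqrt (y ^ 2 + 2)) < erfc y ∧
    erfc y ≤ (2 / Real.sqrt Real.pi) * Real.exp (-y ^ 2) / (y + Real.sqrt (y ^ 2 + 4 / Real.pi)) :=
  ⟨erfcBound_lt_erfc le_rfl y,
    erfc_le_erfcBound ((one_le_div pi_pos).mpr pi_le_four) le_rfl hy.le⟩
end

section
/- Let 0 < β < α < 1. The function φ(γ) = −(1−β)·H((1−α−γ)/(1−β)) − β·H((β−γ)/β), where H(x) = x·log x + (1−x)·log(1−x), is strictly concave on the open interval γ ∈ (max(0, β−α), min(1−α, β)); in particular its second derivative equals −(1−β)/((1−α−γ)(α−β+γ)) − β/(γ(β−γ)), which is negative whenever 1−α−γ > 0, α−β+γ > 0, γ > 0, and β−γ > 0. -/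
/-! Since `H = -binEntropy`, the function is `(1 - β) h((1 - α - γ)/(1 - β)) + β h((β - γ)/β)` with
`h` the binary entropy. A block `c h((a - γ)/c)` has derivative `log (a - γ) - log (c - (a - γ))`,
whose own derivative `-c / ((a - γ) (c - (a - γ)))` is negative where both log-arguments are
positive. -/

open Real

/-- H(x) = x·log x + (1−x)·log(1−x) -/
noncomputable def H (x : ℝ) : ℝ := x * Real.log x + (1 - x) * Real.log (1 - x)

open Filter Topology

theorem H_eq_neg_binEntropy (x : ℝ) : H x = -binEntropy x := by
  simp only [H, binEntropy, log_inv]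
  ring

section

variable {a c γ : ℝ}

theorem hasDerivAt_mul_binEntropy_sub_div (hc : c ≠ 0) (hx : a - γ ≠ 0) (hy : c - (a - γ) ≠ 0) :
    HasDerivAt (fun γ => c * binEntropy ((a - γ) / c)) (log (a - γ) - log (c - (a - γ))) γ := by
  have hu₀ : (a - γ) / c ≠ 0 := div_ne_zero hx hc
  have hu₁ : (a - γ) / c ≠ 1 := by
    rw [ne_eq, div_eq_one_iff_eq hc]
    exact fun h => hy (sub_eq_zero.2 h.symm)
  have hu : HasDerivAt (fun γ => (a - γ) / c) (-1 / c) γ :=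
    ((hasDerivAt_id' γ).const_sub a).div_const c
  refine (((hasDerivAt_binEntropy hu₀ hu₁).comp γ hu).const_mul c).congr_deriv ?_
  rw [one_sub_div hc, log_div hy hc, log_div hx hc]
  field_simp
  ring

theorem hasDerivAt_log_sub_sub_log_sub (hx : a - γ ≠ 0) (hy : c - (a - γ) ≠ 0) :
    HasDerivAt (fun γ => log (a - γ) - log (c - (a - γ))) (-c / ((a - γ) * (c - (a - γ)))) γ := by
  have hx' := ((hasDerivAt_id' γ).const_sub a).log hx
  have hy' := (((hasDerivAt_id' γ).const_sub a).const_sub c).log hy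
  refine (hx'.sub hy').congr_deriv ?_
  field_simp
  ring

end

theorem mem_Ioo_max_min_iff {α β γ : ℝ} :
    γ ∈ Set.Ioo (max 0 (β - α)) (min (1 - α) β) ↔
      0 < 1 - α - γ ∧ 0 < α - β + γ ∧ 0 < γ ∧ 0 < β - γ := by
  simp only [Set.mem_Ioo, max_lt_iff, lt_min_iff]
  constructor
  · rintro ⟨⟨h₀, h₁⟩, h₂, h₃⟩
    exact ⟨by linarith, by linarith, h₀, by linarith⟩
  · rintro ⟨h₀, h₁, h₂, h₃⟩
    exact ⟨⟨h₂, by linarith⟩, by linarith, by linarith⟩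

noncomputable def phi (α β γ : ℝ) : ℝ :=
  (1 - β) * binEntropy ((1 - α - γ) / (1 - β)) + β * binEntropy ((β - γ) / β)

section

variable {α β γ : ℝ}

theorem neg_mul_H_sub_mul_H_eq_phi (α β : ℝ) :
    (fun γ : ℝ => -(1 - β) * H ((1 - α - γ) / (1 - β)) - β * H ((β - γ) / β)) = phi α β := by
  funext γ
  simp only [phi, H_eq_neg_binEntropy]
  ring

theorem hasDerivAt_phi (h₁ : 0 < 1 - α - γ) (h₂ : 0 < α - β + γ) (h₃ : 0 < γ) (h₄ : 0 < β - γ) :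
    HasDerivAt (phi α β)
      ((log (1 - α - γ) - log (1 - β - (1 - α - γ))) + (log (β - γ) - log (β - (β - γ)))) γ :=
  (hasDerivAt_mul_binEntropy_sub_div (by linarith) h₁.ne' (by linarith)).add
    (hasDerivAt_mul_binEntropy_sub_div (by linarith) h₄.ne' (by linarith))

theorem deriv_deriv_phi (h₁ : 0 < 1 - α - γ) (h₂ : 0 < α - β + γ) (h₃ : 0 < γ) (h₄ : 0 < β - γ) :
    deriv (deriv (phi α β)) γ = -(1 - β) / ((1 - α - γ) * (α - β + γ)) - β / (γ * (β - γ)) := by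
  have hγ : γ ∈ Set.Ioo (max 0 (β - α)) (min (1 - α) β) :=
    mem_Ioo_max_min_iff.2 ⟨h₁, h₂, h₃, h₄⟩
  have hderiv : deriv (phi α β) =ᶠ[𝓝 γ] _ :=
    eventually_of_mem (isOpen_Ioo.mem_nhds hγ) fun x hx => by
      obtain ⟨hx₁, hx₂, hx₃, hx₄⟩ := mem_Ioo_max_min_iff.1 hx
      exact (hasDerivAt_phi hx₁ hx₂ hx₃ hx₄).deriv
  rw [hderiv.deriv_eq]
  refine ((hasDerivAt_log_sub_sub_log_sub (c := 1 - β) h₁.ne' (by linarith)).add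
    (hasDerivAt_log_sub_sub_log_sub (c := β) h₄.ne' (by linarith))).deriv.trans ?_
  ring

theorem deriv_deriv_phi_neg (h₁ : 0 < 1 - α - γ) (h₂ : 0 < α - β + γ) (h₃ : 0 < γ)
    (h₄ : 0 < β - γ) :
    -(1 - β) / ((1 - α - γ) * (α - β + γ)) - β / (γ * (β - γ)) < 0 := by
  have := div_pos (by linarith : (0 : ℝ) < 1 - β) (mul_pos h₁ h₂)
  have := div_pos (by linarith : 0 < β) (mul_pos h₃ h₄)
  rw [neg_div]
  linarith

end

theorem stmt6_general (α β : ℝ) :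
    StrictConcaveOn ℝ (Set.Ioo (max 0 (β - α)) (min (1 - α) β))
      (fun γ : ℝ => -(1 - β) * H ((1 - α - γ) / (1 - β)) - β * H ((β - γ) / β)) ∧
    ∀ γ : ℝ, 0 < 1 - α - γ → 0 < α - β + γ → 0 < γ → 0 < β - γ →
      (deriv (deriv (fun γ : ℝ => -(1 - β) * H ((1 - α - γ) / (1 - β)) - β * H ((β - γ) / β))) γ
        = -(1 - β) / ((1 - α - γ) * (α - β + γ)) - β / (γ * (β - γ)) ∧
      -(1 - β) / ((1 - α - γ) * (α - β + γ)) - β / (γ * (β - γ)) < 0) := by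
  rw [neg_mul_H_sub_mul_H_eq_phi]
  refine ⟨strictConcaveOn_of_deriv2_neg' (convex_Ioo _ _) (fun γ hγ => ?_) (fun γ hγ => ?_),
    fun γ h₁ h₂ h₃ h₄ => ⟨deriv_deriv_phi h₁ h₂ h₃ h₄, deriv_deriv_phi_neg h₁ h₂ h₃ h₄⟩⟩
  all_goals obtain ⟨h₁, h₂, h₃, h₄⟩ := mem_Ioo_max_min_iff.1 hγ
  · exact (hasDerivAt_phi h₁ h₂ h₃ h₄).continuousAt.continuousWithinAt
  · rw [Function.iterate_succ_apply, Function.iterate_one, deriv_deriv_phi h₁ h₂ h₃ h₄]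
    exact deriv_deriv_phi_neg h₁ h₂ h₃ h₄

theorem stmt6 (α β : ℝ) (hβ : 0 < β) (hβα : β < α) (hα : α < 1) :
    StrictConcaveOn ℝ (Set.Ioo (max 0 (β - α)) (min (1 - α) β))
      (fun γ : ℝ => -(1 - β) * H ((1 - α - γ) / (1 - β)) - β * H ((β - γ) / β)) ∧
    ∀ γ : ℝ, 0 < 1 - α - γ → 0 < α - β + γ → 0 < γ → 0 < β - γ →
      (deriv (deriv (fun γ : ℝ => -(1 - β) * H ((1 - α - γ) / (1 - β)) - β * H ((β - γ) / β))) γ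
        = -(1 - β) / ((1 - α - γ) * (α - β + γ)) - β / (γ * (β - γ)) ∧
      -(1 - β) / ((1 - α - γ) * (α - β + γ)) - β / (γ * (β - γ)) < 0) :=
  stmt6_general α β
end

section
/- Let α > 0, A₀ > 0, set c₃ = (1−A₀²)·√α/A₀ and γ̂ = (c₃ − √(c₃²+4α))/4. Then γ̂·c₃ − (α/2)·log(1 − c₃/(2γ̂)) = −(1−A₀²)·α/2 + α·log(A₀), provided 1 − c₃/(2γ̂) > 0. -/
/-!
With `s = √α`, the identity `(1 - A₀²)² + 4 A₀² = (1 + A₀²)²` makes the discriminant a perfect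
square, so `γ̂ = -s A₀ / 2`. Then `γ̂ c₃ = -(1 - A₀²) α / 2` and `1 - c₃ / (2 γ̂) = A₀⁻²`,
whose logarithm is `-2 log A₀`.
-/

open Real

section OptimalRate

variable {s A : ℝ}

lemma sqrt_sq_add_four_mul_sq (hs : 0 ≤ s) (hA : 0 < A) :
    √(((1 - A ^ 2) * s / A) ^ 2 + 4 * s ^ 2) = s * (1 + A ^ 2) / A := by
  rw [show ((1 - A ^ 2) * s / A) ^ 2 + 4 * s ^ 2 = (s * (1 + A ^ 2) / A) ^ 2 by
    field_simp; ring]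
  exact sqrt_sq (by positivity)

lemma optimal_root_eq (hs : 0 ≤ s) (hA : 0 < A) :
    ((1 - A ^ 2) * s / A - √(((1 - A ^ 2) * s / A) ^ 2 + 4 * s ^ 2)) / 4 = -(s * A) / 2 := by
  rw [sqrt_sq_add_four_mul_sq hs hA]
  field_simp
  ring

lemma one_sub_div_optimal_root (hs : 0 < s) (hA : 0 < A) :
    1 - (1 - A ^ 2) * s / A / (2 * (-(s * A) / 2)) = (A ^ 2)⁻¹ := by
  field_simp
  ring

end OptimalRate

theorem stmt13_general (α A₀ : ℝ) (hα : 0 < α) (hA : 0 < A₀)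
    (c₃ : ℝ) (hc : c₃ = (1 - A₀ ^ 2) * Real.sqrt α / A₀)
    (γ : ℝ) (hγ : γ = (c₃ - Real.sqrt (c₃ ^ 2 + 4 * α)) / 4) :
    γ * c₃ - (α / 2) * Real.log (1 - c₃ / (2 * γ))
      = -(1 - A₀ ^ 2) * α / 2 + α * Real.log A₀ := by
  have hs : 0 < √α := sqrt_pos.mpr hα
  have hsq : √α ^ 2 = α := sq_sqrt hα.le
  have hγ' : γ = -(√α * A₀) / 2 := by
    rw [hγ, hc, ← optimal_root_eq hs.le hA, hsq]
  have hlog : log (1 - c₃ / (2 * γ)) = -(2 * log A₀) := by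
    rw [hγ', hc, one_sub_div_optimal_root hs hA, log_inv, log_pow]
    push_cast
    ring
  rw [hlog, hγ', hc]
  field_simp
  linear_combination (A₀ ^ 2 - 1) * hsq

theorem stmt13 (α A₀ : ℝ) (hα : 0 < α) (hA : 0 < A₀)
    (c₃ : ℝ) (hc : c₃ = (1 - A₀ ^ 2) * Real.sqrt α / A₀)
    (γ : ℝ) (hγ : γ = (c₃ - Real.sqrt (c₃ ^ 2 + 4 * α)) / 4)
    (hpos : 0 < 1 - c₃ / (2 * γ)) :
    γ * c₃ - (α / 2) * Real.log (1 - c₃ / (2 * γ))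
      = -(1 - A₀ ^ 2) * α / 2 + α * Real.log A₀ :=
  stmt13_general α A₀ hα hA c₃ hc γ hγ
end
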